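/- arXiv:1203.2868 — 8 statements merged into one kernel-verified Lean document; each statement's English description precedes it below -/
import Mathlib

section
/- Every 1-intersecting hypergraph admits a 2-strong coloring using at most 3 colors. -/
/-- Every 1-intersecting hypergraph admits a 2-strong coloring using at most 3 colors. -/
theorem stmt_0 {V : Type*} [DecidableEq V] (E : Set (Finset V))
    (hE : ∀ e₁ ∈ E, ∀ e₂ ∈ E, 1 ≤ (e₁ ∩ e₂).card) :
    ∃ f : V → Fin 3, ∀ e ∈ E, min 2 e.card ≤ (e.image f).card := by
  by_cases hEne : E.Nonempty
  · have hSne : {n | ∃ e ∈ E, e.card = n}.Nonempty :=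
      ⟨hEne.choose.card, hEne.choose, hEne.choose_spec, rfl⟩
    obtain ⟨e₀, he₀, he₀card⟩ := Nat.sInf_mem hSne
    have hmin : ∀ e ∈ E, e₀.card ≤ e.card := fun e he =>
      he₀card ▸ Nat.sInf_le ⟨e, he, rfl⟩
    have he₀ne : e₀.Nonempty := by
      have h := hE e₀ he₀ e₀ he₀
      rw [Finset.inter_self] at h
      exact Finset.card_pos.mp h
    obtain ⟨x, hx⟩ := he₀ne
    refine ⟨fun v => if v = x then 0 else if v ∈ e₀ then 1 else 2, ?_⟩
    set f : V → Fin 3 := fun v => if v = x then 0 else if v ∈ e₀ then 1 else 2 with hf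
    intro e he
    have hene : e.Nonempty := by
      have h := hE e he e he
      rw [Finset.inter_self] at h
      exact Finset.card_pos.mp h
    rcases Nat.lt_or_ge e.card 2 with h2 | h2
    · have h1 : 1 ≤ (e.image f).card := Finset.card_pos.mpr (hene.image f)
      omega
    · have key : 1 < (e.image f).card := by
        rw [Finset.one_lt_card]
        by_cases hxe : x ∈ e
        · obtain ⟨y, hy, hyx⟩ := Finset.exists_mem_ne h2 x
          refine ⟨f x, Finset.mem_image_of_mem f hxe, f y, Finset.mem_image_of_mem f hy, ?_⟩
          simp only [hf, if_pos rfl, if_neg hyx]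
          split <;> decide
        · have hint := hE e he e₀ he₀
          obtain ⟨y, hy⟩ := Finset.card_pos.mp hint
          rw [Finset.mem_inter] at hy
          have hyx : y ≠ x := fun h => hxe (h ▸ hy.1)
          have hnsub : ¬ e ⊆ e₀.erase x := by
            intro hsub
            have h1 := Finset.card_le_card hsub
            have h2 := Finset.card_erase_of_mem hx
            have h3 := hmin e he
            have h4 : 1 ≤ e₀.card := Finset.card_pos.mpr ⟨x, hx⟩
            omega
          obtain ⟨z, hz, hz'⟩ := Finset.not_subset.mp hnsub
          have hzx : z ≠ x := fun h => hxe (h ▸ hz)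
          have hze₀ : z ∉ e₀ := fun h => hz' (Finset.mem_erase.mpr ⟨hzx, h⟩)
          refine ⟨f y, Finset.mem_image_of_mem f hy.1, f z, Finset.mem_image_of_mem f hz, ?_⟩
          simp only [hf, if_neg hyx, if_pos hy.2, if_neg hzx, if_neg hze₀]
          decide
      omega
  · exact ⟨fun _ => 0, fun e he => absurd ⟨e, he⟩ hEne⟩
end

section
/- Every 2-intersecting hypergraph admits a 2-strong coloring using at most 2 colors. -/
/-- Every 2-intersecting hypergraph admits a 2-strong coloring using at most 2 colors. -/
theorem stmt_2 {V : Type*} [DecidableEq V] (E : Set (Finset V))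
    (hE : ∀ e₁ ∈ E, ∀ e₂ ∈ E, 2 ≤ (e₁ ∩ e₂).card) :
    ∃ f : V → Fin 2, ∀ e ∈ E, min 2 e.card ≤ (e.image f).card := by
  classical
  rcases Set.eq_empty_or_nonempty E with hEe | ⟨e', he'⟩
  · exact ⟨fun _ => 0, by simp [hEe]⟩
  have hex : ∃ n, ∃ e ∈ E, e.card = n := ⟨e'.card, e', he', rfl⟩
  obtain ⟨e₀, he₀E, he₀card⟩ := Nat.find_spec hex
  have hmin : ∀ e ∈ E, e₀.card ≤ e.card := by
    intro e heE
    rw [he₀card]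
    exact Nat.find_min' hex ⟨e, heE, rfl⟩
  have he₀2 : 2 ≤ e₀.card := by
    have := hE e₀ he₀E e₀ he₀E; simpa using this
  obtain ⟨v, hv⟩ : e₀.Nonempty := Finset.card_pos.1 (by omega)
  refine ⟨fun x => if x ∈ e₀ ∧ x ≠ v then 0 else 1, ?_⟩
  intro e heE
  have he2 : 2 ≤ e.card := by have := hE e heE e heE; simpa using this
  have hint : 2 ≤ (e ∩ e₀).card := hE e heE e₀ he₀E
  obtain ⟨a, haI, hav⟩ : ∃ a ∈ e ∩ e₀, a ≠ v := by
    by_contra h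
    push_neg at h
    have hsub : e ∩ e₀ ⊆ {v} := fun x hx => Finset.mem_singleton.2 (h x hx)
    have := Finset.card_le_card hsub
    simp only [Finset.card_singleton] at this
    omega
  obtain ⟨b, hbe, hb⟩ : ∃ b ∈ e, ¬(b ∈ e₀ ∧ b ≠ v) := by
    by_contra h
    push_neg at h
    have hsub : e ⊆ e₀.erase v := fun x hx =>
      Finset.mem_erase.2 ⟨(h x hx).2, (h x hx).1⟩
    have h1 := Finset.card_le_card hsub
    rw [Finset.card_erase_of_mem hv] at h1
    have h2 := hmin e heE
    omega
  have hmin2 : min 2 e.card = 2 := min_eq_left he2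
  rw [hmin2]
  rw [Finset.mem_inter] at haI
  have : (1:ℕ) < (e.image fun x => if x ∈ e₀ ∧ x ≠ v then (0 : Fin 2) else 1).card := by
    refine Finset.one_lt_card.2 ⟨0, ?_, 1, ?_, by decide⟩
    · exact Finset.mem_image.2 ⟨a, haI.1, by simp [haI.2, hav]⟩
    · exact Finset.mem_image.2 ⟨b, hbe, if_neg hb⟩
  omega
end

section
/- For every integer t ≥ 2, every t-intersecting hypergraph admits a 2-strong coloring using at most 2 colors. -/
/-- For every t ≥ 2, every t-intersecting hypergraph admits a 2-strong coloring
using at most 2 colors. -/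
theorem stmt_3 (t : ℕ) (ht : 2 ≤ t) {V : Type*} [DecidableEq V] (E : Set (Finset V))
    (hE : ∀ e₁ ∈ E, ∀ e₂ ∈ E, t ≤ (e₁ ∩ e₂).card) :
    ∃ f : V → Fin 2, ∀ e ∈ E, min 2 e.card ≤ (e.image f).card := by
  rcases Set.eq_empty_or_nonempty E with hEe | hEne
  · exact ⟨fun _ => 0, fun e he => by simp [hEe] at he⟩
  -- pick an edge of minimal cardinality
  have hSne : (Finset.card '' E).Nonempty := hEne.image _
  obtain ⟨e₀, he₀, hcard₀⟩ := Nat.sInf_mem hSne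
  have hmin : ∀ e ∈ E, e₀.card ≤ e.card := by
    intro e he
    rw [hcard₀]
    exact Nat.sInf_le ⟨e, he, rfl⟩
  -- every edge has card ≥ 2
  have hbig : ∀ e ∈ E, 2 ≤ e.card := by
    intro e he
    have := hE e he e he
    simpa using le_trans ht this
  -- pick x ∈ e₀
  obtain ⟨x, hx⟩ : e₀.Nonempty := Finset.card_pos.mp (by linarith [hbig e₀ he₀])
  refine ⟨fun v => if v ∈ e₀ ∧ v ≠ x then 0 else 1, fun e he => ?_⟩
  have h2 : 2 ≤ e.card := hbig e he
  rw [min_eq_left h2]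
  -- a vertex of color 0: some y ∈ e ∩ e₀ with y ≠ x
  have hint : 2 ≤ (e ∩ e₀).card := le_trans ht (hE e he e₀ he₀)
  obtain ⟨y, hy, z, hz, hyz⟩ := Finset.one_lt_card.mp hint
  have hy0 : ∃ y₀ ∈ e ∩ e₀, y₀ ≠ x := by
    by_cases h : y = x
    · exact ⟨z, hz, by rw [← h]; exact fun hzy => hyz hzy.symm⟩
    · exact ⟨y, hy, h⟩
  obtain ⟨y₀, hy₀, hy₀x⟩ := hy0
  -- a vertex of color 1: e ⊄ e₀ \ {x}
  have hnot : ¬ (∀ v ∈ e, v ∈ e₀ ∧ v ≠ x) := by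
    intro h
    have hsub : e ⊆ e₀.erase x := fun v hv => Finset.mem_erase.mpr ⟨(h v hv).2, (h v hv).1⟩
    have := Finset.card_le_card hsub
    rw [Finset.card_erase_of_mem hx] at this
    have := hmin e he
    omega
  push_neg at hnot
  obtain ⟨w, hw, hw1⟩ := hnot
  apply Finset.one_lt_card.mpr
  refine ⟨0, ?_, 1, ?_, by decide⟩
  · exact Finset.mem_image.mpr ⟨y₀, (Finset.mem_inter.mp hy₀).1,
      by simp [(Finset.mem_inter.mp hy₀).2, hy₀x]⟩
  · refine Finset.mem_image.mpr ⟨w, hw, ?_⟩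
    simp only [ite_eq_right_iff]
    intro h; exact absurd (hw1 h.1) h.2
end

section
/- For all integers c ≥ 2 and 0 ≤ t ≤ c − 2, and for every natural number ℓ, there exists a t-intersecting hypergraph that admits no c-strong coloring using ℓ colors. -/
/-- For all c ≥ 2, 0 ≤ t ≤ c - 2 and every ℓ, there is a t-intersecting hypergraph
that admits no c-strong coloring using ℓ colors. -/
theorem stmt_5 (c t : ℕ) (hc : 2 ≤ c) (ht : t ≤ c - 2) (ℓ : ℕ) :
    ∃ (n : ℕ) (E : Set (Finset (Fin n))),
      (∀ e₁ ∈ E, ∀ e₂ ∈ E, t ≤ (e₁ ∩ e₂).card) ∧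
      ¬ ∃ f : Fin n → Fin ℓ, ∀ e ∈ E, min c e.card ≤ (e.image f).card := by
  have htc : t + 2 ≤ c := by omega
  set k := ℓ * (c - t - 1) + 1 with hk
  set n := t + k with hn
  have htn : t ≤ n := by omega
  let T : Finset (Fin n) := (Finset.range t).attachFin
    (fun m hm => lt_of_lt_of_le (Finset.mem_range.mp hm) htn)
  have hT : T.card = t := by
    simp [T, Finset.card_attachFin]
  refine ⟨n, {e | ∃ S : Finset (Fin n), Disjoint T S ∧ S.card = c - t ∧ e = T ∪ S}, ?_, ?_⟩
  · rintro e₁ ⟨S₁, hd₁, hc₁, rfl⟩ e₂ ⟨S₂, hd₂, hc₂, rfl⟩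
    calc t = T.card := hT.symm
      _ ≤ ((T ∪ S₁) ∩ (T ∪ S₂)).card := Finset.card_le_card
          (Finset.subset_inter Finset.subset_union_left Finset.subset_union_left)
  · rintro ⟨f, hf⟩
    have hcompl : Tᶜ.card = k := by
      rw [Finset.card_compl, hT]
      simp [hn]
    obtain ⟨y, -, hy⟩ := Finset.exists_lt_card_fiber_of_mul_lt_card_of_maps_to
      (s := Tᶜ) (t := (Finset.univ : Finset (Fin ℓ))) (f := f) (n := c - t - 1)
      (fun a _ => Finset.mem_univ _)
      (by rw [hcompl, Finset.card_univ, Fintype.card_fin]; omega)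
    obtain ⟨S, hS, hScard⟩ := Finset.exists_subset_card_eq
      (s := Tᶜ.filter fun x => f x = y) (n := c - t) (by omega)
    have hSsub : S ⊆ Tᶜ := hS.trans (Finset.filter_subset _ _)
    have hdisj : Disjoint T S := Finset.disjoint_left.mpr
      (fun a haT haS => (Finset.mem_compl.mp (hSsub haS)) haT)
    have hmem : (T ∪ S) ∈ {e | ∃ S : Finset (Fin n),
        Disjoint T S ∧ S.card = c - t ∧ e = T ∪ S} := ⟨S, hdisj, hScard, rfl⟩
    have hcard : (T ∪ S).card = c := by
      rw [Finset.card_union_of_disjoint hdisj, hT, hScard]; omega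
    have himg : ((T ∪ S).image f).card ≤ t + 1 := by
      rw [Finset.image_union]
      calc ((T.image f) ∪ (S.image f)).card ≤ (T.image f).card + (S.image f).card :=
            Finset.card_union_le _ _
        _ ≤ t + 1 := by
            have h1 : (T.image f).card ≤ t := hT ▸ Finset.card_image_le
            have h2 : S.image f ⊆ {y} := by
              intro z hz
              obtain ⟨x, hx, rfl⟩ := Finset.mem_image.mp hz
              have := (Finset.mem_filter.mp (hS hx)).2
              simp [this]
            have h2' : (S.image f).card ≤ 1 := le_trans (Finset.card_le_card h2) (by simp)
            omega
    have := hf _ hmem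
    rw [hcard, min_self] at this
    omega
end

section
/- For every integer c ≥ 2, the hypergraph G whose vertex set is {1, …, 3c−3} and whose edges are all (2c−2)-element subsets of the vertex set is (c−1)-intersecting, and G admits no c-strong coloring using at most 2c − 2 colors. -/
/-!
Two `(2c-2)`-subsets of a `(3c-3)`-set meet in at least `c-1` points by inclusion–exclusion.
For the colouring, let `k = c - 1`, so there are `3k` vertices and `2k` colours. Either `k`
colours each colour at least two vertices, or all colour classes outside some set `C` of `k`
colours are singletons or empty, and then `C` colours at least `3k - k = 2k` vertices. Either way
some edge is coloured by at most `k < c` colours.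
-/

open Finset

namespace Finset

theorem card_add_card_le_card_inter_add_card {α : Type*} [Fintype α] [DecidableEq α]
    (s t : Finset α) : #s + #t ≤ #(s ∩ t) + Fintype.card α := by
  rw [← card_union_add_card_inter, add_comm]
  exact Nat.add_le_add_left (card_le_univ _) _

end Finset

section Colouring

variable {α β : Type*} [Fintype α] [Fintype β] [DecidableEq β] (f : α → β)

theorem exists_card_eq_and_two_mul_le_sum_card_fiber {k : ℕ} (hkβ : k ≤ Fintype.card β)
    (hβα : Fintype.card β + k ≤ Fintype.card α) :
    ∃ C : Finset β, #C = k ∧ 2 * k ≤ ∑ b ∈ C, #{x | f x = b} := by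
  set heavy : Finset β := {b | 2 ≤ #{x | f x = b}}
  by_cases hheavy : k ≤ #heavy
  · obtain ⟨C, hC, hCk⟩ := exists_subset_card_eq hheavy
    refine ⟨C, hCk, ?_⟩
    calc 2 * k = #C • 2 := by rw [hCk, smul_eq_mul, mul_comm]
      _ ≤ ∑ b ∈ C, #{x | f x = b} :=
        card_nsmul_le_sum C _ 2 fun b hb => (mem_filter.mp (hC hb)).2
  · obtain ⟨C, hC, hCk⟩ := exists_superset_card_eq (Nat.le_of_not_le hheavy) hkβ
    refine ⟨C, hCk, ?_⟩
    have hlight : ∑ b ∈ Cᶜ, #{x | f x = b} ≤ #Cᶜ := by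
      simpa using sum_le_card_nsmul Cᶜ (fun b => #{x | f x = b}) 1 fun b hb => by
        have : b ∉ heavy := fun h => (mem_compl.mp hb) (hC h)
        simpa [heavy] using this
    have htotal : ∑ b, #{x | f x = b} = Fintype.card α := by
      simpa using (card_eq_sum_card_fiberwise (f := f) (s := univ) (t := univ) (by simp)).symm
    rw [card_compl, hCk] at hlight
    have := sum_add_sum_compl C fun b => #{x | f x = b}
    omega

theorem exists_card_eq_two_mul_and_card_image_le {k : ℕ} (hkβ : k ≤ Fintype.card β)
    (hβα : Fintype.card β + k ≤ Fintype.card α) :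
    ∃ e : Finset α, #e = 2 * k ∧ #(e.image f) ≤ k := by
  obtain ⟨C, hCk, hC⟩ := exists_card_eq_and_two_mul_le_sum_card_fiber f hkβ hβα
  rw [sum_card_fiberwise_eq_card_filter] at hC
  obtain ⟨e, he, hek⟩ := exists_subset_card_eq hC
  refine ⟨e, hek, hCk ▸ card_le_card ?_⟩
  intro b hb
  obtain ⟨x, hx, rfl⟩ := mem_image.mp hb
  exact (mem_filter.mp (he hx)).2

end Colouring

/-- For every c ≥ 2, the hypergraph whose vertices are {1,…,3c−3} and whose edges are
all (2c−2)-element subsets is (c−1)-intersecting and has no c-strong coloring with at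
most 2c − 2 colors. -/
theorem stmt_6 (c : ℕ) (hc : 2 ≤ c) :
    (∀ e₁ ∈ {e : Finset (Fin (3 * c - 3)) | e.card = 2 * c - 2},
     ∀ e₂ ∈ {e : Finset (Fin (3 * c - 3)) | e.card = 2 * c - 2},
      c - 1 ≤ (e₁ ∩ e₂).card) ∧
    ¬ ∃ f : Fin (3 * c - 3) → Fin (2 * c - 2),
      ∀ e ∈ {e : Finset (Fin (3 * c - 3)) | e.card = 2 * c - 2},
        min c e.card ≤ (e.image f).card := by
  constructor
  · intro e₁ h₁ e₂ h₂
    have hcard := card_add_card_le_card_inter_add_card e₁ e₂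
    simp only [Set.mem_ofPred_eq, Fintype.card_fin] at h₁ h₂ hcard
    omega
  · rintro ⟨f, hf⟩
    obtain ⟨e, hek, himage⟩ := exists_card_eq_two_mul_and_card_image_le f (k := c - 1)
      (by simp only [Fintype.card_fin]; omega) (by simp only [Fintype.card_fin]; omega)
    have hstrong := hf e (by simp only [Set.mem_ofPred_eq]; omega)
    rw [hek] at hstrong
    omega
end

section
/- For all integers t ≥ c ≥ 2, the hypergraph G whose vertex set is {1, …, (6c−1)t} and whose edges are all 3ct-element subsets of the vertex set is t-intersecting, and G admits no c-strong coloring using at most 2c − 3 colors. -/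
/-- Removing `j` minimal elements keeps a proportionally large sum: there is a
subset `T` of `s` of size `s.card - j` with `(s.card - j) * (sum over s) ≤ s.card * (sum over T)`. -/
lemma aux_top {κ : Type*} [DecidableEq κ] (g : κ → ℕ) :
    ∀ (j : ℕ) (s : Finset κ), j ≤ s.card →
      ∃ T ⊆ s, T.card = s.card - j ∧
        (s.card - j) * ∑ i ∈ s, g i ≤ s.card * ∑ i ∈ T, g i := by
  intro j
  induction j with
  | zero => intro s _; exact ⟨s, Finset.Subset.refl s, by simp, by simp⟩
  | succ j ih =>
    intro s hj
    have hne : s.Nonempty := Finset.card_pos.mp (by omega)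
    obtain ⟨i, hi, hmin⟩ := Finset.exists_min_image s g hne
    have hcard : (s.erase i).card = s.card - 1 := Finset.card_erase_of_mem hi
    obtain ⟨T, hTs, hTcard, hTsum⟩ := ih (s.erase i) (by omega)
    refine ⟨T, hTs.trans (Finset.erase_subset i s), by omega, ?_⟩
    have hSsplit : ∑ x ∈ s.erase i, g x + g i = ∑ x ∈ s, g x :=
      Finset.sum_erase_add s g hi
    have hTmin : T.card * g i ≤ ∑ x ∈ T, g x := by
      calc T.card * g i = ∑ _x ∈ T, g i := by rw [Finset.sum_const, smul_eq_mul]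
        _ ≤ ∑ x ∈ T, g x :=
          Finset.sum_le_sum (fun x hx => hmin x (Finset.mem_of_mem_erase (hTs hx)))
    obtain ⟨k, hk⟩ : ∃ k, s.card = k + (j + 1) := ⟨s.card - (j + 1), by omega⟩
    have h1 : s.card - (j + 1) = k := by omega
    have h2 : (s.erase i).card - j = k := by omega
    have h3 : (s.erase i).card = k + j := by omega
    rw [h1]
    rw [h2, h3] at hTsum
    rw [h2] at hTcard
    rw [hk, ← hSsplit]
    rw [hTcard] at hTmin
    nlinarith [hTsum, hTmin]

/-- For all t ≥ c ≥ 2, the hypergraph whose vertices are {1,…,(6c−1)t} and whose edges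
are all 3ct-element subsets is t-intersecting and has no c-strong coloring with at
most 2c − 3 colors. -/
theorem stmt_9 (t c : ℕ) (hc : 2 ≤ c) (ht : c ≤ t) :
    (∀ e₁ ∈ {e : Finset (Fin ((6 * c - 1) * t)) | e.card = 3 * c * t},
     ∀ e₂ ∈ {e : Finset (Fin ((6 * c - 1) * t)) | e.card = 3 * c * t},
      t ≤ (e₁ ∩ e₂).card) ∧
    ¬ ∃ f : Fin ((6 * c - 1) * t) → Fin (2 * c - 3),
      ∀ e ∈ {e : Finset (Fin ((6 * c - 1) * t)) | e.card = 3 * c * t},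
        min c e.card ≤ (e.image f).card := by
  have hct : c ≤ 3 * c * t := by nlinarith
  constructor
  · intro e₁ he₁ e₂ he₂
    simp only [Set.mem_setOf_eq] at he₁ he₂
    have hU : (e₁ ∪ e₂).card ≤ (6 * c - 1) * t := by
      calc (e₁ ∪ e₂).card ≤ Fintype.card (Fin ((6 * c - 1) * t)) := Finset.card_le_univ _
        _ = (6 * c - 1) * t := Fintype.card_fin _
    have hsum : (e₁ ∪ e₂).card + (e₁ ∩ e₂).card = e₁.card + e₂.card :=
      Finset.card_union_add_card_inter e₁ e₂
    rw [he₁, he₂] at hsum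
    have key : (6 * c - 1) * t + t = 3 * c * t + 3 * c * t := by
      rw [Nat.sub_mul, one_mul]
      have : t ≤ 6 * c * t := by nlinarith
      have h6 : 6 * c * t = 3 * c * t + 3 * c * t := by ring
      omega
    omega
  · rintro ⟨f, hf⟩
    -- fiber sizes
    set g : Fin (2 * c - 3) → ℕ := fun k => (Finset.univ.filter (fun v => f v = k)).card with hg
    have htotal : ∑ k ∈ Finset.univ, g k = (6*c-1)*t := by
      rw [hg]
      have := Finset.card_eq_sum_card_fiberwise
        (f := f) (s := (Finset.univ : Finset (Fin ((6 * c - 1) * t)))) (t := Finset.univ)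
        (fun x _ => Finset.mem_univ _)
      rw [← this, Finset.card_univ, Fintype.card_fin]
    have hcardκ : (Finset.univ : Finset (Fin (2 * c - 3))).card = 2 * c - 3 := by
      rw [Finset.card_univ, Fintype.card_fin]
    obtain ⟨T, hTs, hTcard, hTsum⟩ := aux_top g (c - 2) Finset.univ (by omega)
    rw [htotal, hcardκ] at hTsum
    rw [hcardκ] at hTcard
    have hTcard' : T.card = c - 1 := by omega
    -- A = vertices colored in T
    set A : Finset (Fin ((6 * c - 1) * t)) := Finset.univ.filter (fun v => f v ∈ T) with hA
    have hAcard : A.card = ∑ k ∈ T, g k := by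
      rw [Finset.card_eq_sum_card_fiberwise
        (f := f) (s := A) (t := T) (fun x hx => (Finset.mem_filter.mp hx).2)]
      refine Finset.sum_congr rfl (fun k hk => ?_)
      congr 1
      rw [hA]
      ext v
      simp only [Finset.mem_filter, Finset.mem_univ, true_and]
      constructor
      · rintro ⟨_, h⟩; exact h
      · intro h; exact ⟨h ▸ hk, h⟩
    -- key inequality: 3ct ≤ |A|
    have hbig : 3 * c * t ≤ A.card := by
      have hpos : 0 < 2 * c - 3 := by omega
      refine Nat.le_of_mul_le_mul_left ?_ hpos
      rw [hAcard]
      refine le_trans ?_ hTsum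
      obtain ⟨d, hd⟩ : ∃ d, c = d + 2 := ⟨c - 2, by omega⟩
      subst hd
      have e1 : 2 * (d + 2) - 3 = 2 * d + 1 := by omega
      have e2 : 2 * (d + 2) - 3 - (d + 2 - 2) = d + 1 := by omega
      have e3 : 6 * (d + 2) - 1 = 6 * d + 11 := by omega
      rw [e2, e1, e3]
      nlinarith
    obtain ⟨e, heA, hecard⟩ := Finset.exists_subset_card_eq hbig
    have hmem : e ∈ {e : Finset (Fin ((6 * c - 1) * t)) | e.card = 3 * c * t} := hecard
    have himg : e.image f ⊆ T := by
      intro k hk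
      obtain ⟨v, hv, hfv⟩ := Finset.mem_image.mp hk
      have := heA hv
      rw [hA, Finset.mem_filter] at this
      exact hfv ▸ this.2
    have h1 : (e.image f).card ≤ c - 1 := hTcard' ▸ Finset.card_le_card himg
    have h2 := hf e hmem
    rw [hecard, min_eq_left hct] at h2
    omega
end

section
/- Fix an integer t ≥ 1 and a real number p with 0 < p < 1/(t+1). If F is a t-intersecting family of subsets of [n], and F' = {T ⊆ [n] : there exists S ∈ F with S ⊆ T} is its upward closure, then μ_p(F') ≤ p^t; that is, the probability that a p-biased subset of [n] contains some member of F is at most p^t. -/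
/-!
Friedgut's spectral argument. Expand in the p-biased characters χ_S(x) = ∏_{i∈S} (1_{i∈x} - p),
which are orthogonal for μ_p with ‖χ_S‖² = (p(1-p))^{|S|}. For a family G with M = μ_p(G) the
weights w_S = ⟨1_G, χ_S⟩² / ‖χ_S‖² are nonnegative, w_∅ = M² and Σ_S w_S = M (Parseval).

Let L be a linear functional on ℝ[X] that only sees the coefficients of X^j for j < t, and put
s = -p/(1-p). The kernel Σ_S L((X + s)^{|S|}) χ_S(x) χ_S(y) / ‖χ_S‖² is L applied to a product over
the coordinates, in which every i ∈ x ∩ y contributes a factor divisible by X; so it vanishes when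
|x ∩ y| ≥ t, and Σ_S λ_{|S|} w_S = 0 for G t-intersecting, where λ_k = L((X + s)^k). For a suitable
L one has λ_0 = 1 - p^t and λ_k ≥ -p^t for k ≥ 1, the latter because the relevant binomial tail is
an alternating sum of decreasing terms as soon as p ≤ 1/(t+1). Hence
0 ≥ (1 - p^t) M² - p^t (M - M²) = M² - p^t M. The upward closure of a t-intersecting family is
again t-intersecting.
-/

open Finset Polynomial

theorem Antitone.sum_range_neg_one_pow_mul_mem_Icc {f : ℕ → ℝ} (hf : Antitone f)
    (h0 : ∀ i, 0 ≤ f i) (n : ℕ) : ∑ i ∈ range n, (-1) ^ i * f i ∈ Set.Icc 0 (f 0) := by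
  induction n generalizing f with
  | zero => simpa using h0 0
  | succ n ih =>
    obtain ⟨h1, h2⟩ := ih (fun a b hab => hf (Nat.succ_le_succ hab)) (fun i => h0 (i + 1))
    have h10 : f 1 ≤ f 0 := hf zero_le_one
    simp only [sum_range_succ', pow_succ, mul_neg_one, neg_mul, sum_neg_distrib, pow_zero, one_mul]
    constructor <;> linarith

lemma antitone_pow_mul_choose {x : ℝ} (hx : 0 ≤ x) {n : ℕ} (hxn : (n + 1) * x ≤ 1) :
    Antitone fun u : ℕ => x ^ u * ((n + u).choose u : ℝ) := by
  refine antitone_nat_of_succ_le fun u => ?_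
  have hpascal : ((n + u + 1).choose (u + 1) : ℝ) * (u + 1) = (n + u + 1) * (n + u).choose u := by
    exact_mod_cast (Nat.add_one_mul_choose_eq (n + u) u).symm
  have hratio : (n + u + 1) * x ≤ u + 1 := by nlinarith
  rw [← mul_le_mul_iff_of_pos_right (by positivity : (0 : ℝ) < u + 1)]
  calc x ^ (u + 1) * ((n + (u + 1)).choose (u + 1) : ℝ) * (u + 1)
      = x ^ u * (n + u).choose u * ((n + u + 1) * x) := by
        rw [← add_assoc, mul_assoc, hpascal]; ring
    _ ≤ x ^ u * (n + u).choose u * (u + 1) := by gcongr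

lemma sum_range_neg_pow_mul_choose_nonneg {x : ℝ} (hx : 0 ≤ x) {n : ℕ} (hxn : (n + 1) * x ≤ 1)
    (m : ℕ) : 0 ≤ ∑ k ∈ range m, (-x) ^ (k - n) * (k.choose n : ℝ) := by
  rcases le_or_gt m n with hmn | hnm
  · exact (sum_eq_zero fun k hk => by
      rw [Nat.choose_eq_zero_of_lt (by simp at hk; omega), Nat.cast_zero, mul_zero]).ge
  obtain ⟨L, rfl⟩ := Nat.exists_eq_add_of_le hnm.le
  rw [sum_range_add, sum_eq_zero fun k hk => by
      rw [Nat.choose_eq_zero_of_lt (mem_range.mp hk), Nat.cast_zero, mul_zero], zero_add]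
  refine ((antitone_pow_mul_choose hx hxn).sum_range_neg_one_pow_mul_mem_Icc
    (fun u => by positivity) L).1.trans_eq (sum_congr rfl fun u _ => ?_)
  rw [Nat.add_sub_cancel_left, Nat.choose_symm_add, neg_pow x, mul_assoc]

section Pairing

variable {R : Type*} [CommRing R]

noncomputable def coeffPairing (c : ℕ → R) (t : ℕ) : R[X] →ₗ[R] R :=
  ∑ j ∈ range t, c j • lcoeff R j

lemma coeffPairing_apply (c : ℕ → R) (t : ℕ) (P : R[X]) :
    coeffPairing c t P = ∑ j ∈ range t, c j * P.coeff j := by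
  simp [coeffPairing]

lemma coeffPairing_eq_zero_of_X_pow_dvd {c : ℕ → R} {t : ℕ} {P : R[X]} (h : X ^ t ∣ P) :
    coeffPairing c t P = 0 := by
  rw [coeffPairing_apply]
  exact sum_eq_zero fun j hj => by rw [X_pow_dvd_iff.mp h j (mem_range.mp hj), mul_zero]

lemma coeffPairing_X_add_C_mul (c : ℕ → R) (n : ℕ) (s : R) (Q : R[X]) :
    coeffPairing c (n + 1) ((X + C s) * Q) =
      coeffPairing (fun j => c (j + 1) + s * c j) (n + 1) Q - c (n + 1) * Q.coeff n := by
  simp only [coeffPairing_apply, add_mul, coeff_add, coeff_C_mul, mul_add, sum_add_distrib]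
  have hshift : ∑ j ∈ range (n + 1), c j * (X * Q).coeff j =
      ∑ j ∈ range (n + 1), c (j + 1) * Q.coeff j - c (n + 1) * Q.coeff n := by
    rw [sum_range_succ', sum_range_succ]
    simp only [coeff_X_mul, coeff_X_mul_zero, mul_zero, add_zero, add_sub_cancel_right]
  rw [hshift]
  simp only [mul_left_comm (c _) s, mul_assoc]
  ring

lemma coeffPairing_X_add_C_pow {y s : R} (hys : y + s = 1) (n m : ℕ) :
    coeffPairing (y ^ ·) (n + 1) ((X + C s) ^ m) =
      1 - y ^ (n + 1) * ∑ k ∈ range m, s ^ (k - n) * k.choose n := by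
  induction m with
  | zero => simp [coeffPairing_apply, coeff_one]
  | succ m ih =>
    have hy : (fun j => y ^ (j + 1) + s * y ^ j) = (y ^ ·) := by
      funext j; linear_combination y ^ j * hys
    rw [pow_succ', coeffPairing_X_add_C_mul, hy, ih, sum_range_succ, coeff_X_add_C_pow]
    ring

end Pairing

lemma X_pow_dvd_sum_C_prod_mul_X_add_C_pow {R α : Type*} [CommRing R] [Fintype α] (s : R)
    (β : α → R) {I : Finset α} {t : ℕ} (hI : t ≤ #I) (hβ : ∀ i ∈ I, 1 + s * β i = 0) :
    X ^ t ∣ ∑ S : Finset α, C (∏ i ∈ S, β i) * (X + C s) ^ #S := by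
  have hprod : ∑ S : Finset α, C (∏ i ∈ S, β i) * (X + C s) ^ #S =
      ∏ i, (1 + (X + C s) * C (β i)) := by
    rw [prod_one_add, powerset_univ]
    refine sum_congr rfl fun S _ => ?_
    rw [prod_mul_distrib, prod_const, map_prod, mul_comm]
  have hfactor : ∀ i ∈ I, X ∣ 1 + (X + C s) * C (β i) := fun i hi => by
    have h : (1 : R[X]) + C s * C (β i) = 0 := by rw [← C_1, ← C_mul, ← C_add, hβ i hi, C_0]
    exact ⟨C (β i), by linear_combination h⟩
  rw [hprod]
  calc X ^ t ∣ X ^ #I := pow_dvd_pow X hI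
    _ = ∏ i ∈ I, X := (prod_const X).symm
    _ ∣ ∏ i ∈ I, (1 + (X + C s) * C (β i)) := prod_dvd_prod_of_dvd _ _ hfactor
    _ ∣ ∏ i, (1 + (X + C s) * C (β i)) := prod_dvd_prod_of_subset _ _ _ (subset_univ I)

/-- The solution of `c t = 0`, `c (j + 1) - p / (1 - p) * c j = -p ^ t / (1 - p) ^ j` for `j < t`;
it has `c 0 = 1 - p ^ t`. -/
noncomputable def spectralCoeff (p : ℝ) (t j : ℕ) : ℝ := (p / (1 - p)) ^ j * (1 - p ^ (t - j))

lemma coeffPairing_spectralCoeff_X_add_C_mul {p : ℝ} (hp1 : p < 1) (n : ℕ) (Q : ℝ[X]) :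
    coeffPairing (spectralCoeff p (n + 1)) (n + 1) ((X + C (-(p / (1 - p)))) * Q) =
      -p ^ (n + 1) * coeffPairing ((1 - p)⁻¹ ^ ·) (n + 1) Q := by
  have hq : 1 - p ≠ 0 := by linarith
  rw [coeffPairing_X_add_C_mul, spectralCoeff, Nat.sub_self, pow_zero, sub_self, mul_zero,
    zero_mul, sub_zero, coeffPairing_apply, coeffPairing_apply, mul_sum]
  refine sum_congr rfl fun j hj => ?_
  obtain ⟨a, ha⟩ := Nat.exists_eq_add_of_lt (mem_range.mp hj)
  rw [spectralCoeff, spectralCoeff, ha, Nat.add_sub_add_right, Nat.add_sub_cancel_left,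
    show j + a + 1 - j = a + 1 by omega]
  simp only [div_pow, inv_pow]
  field_simp
  ring

lemma sub_pow_le_coeffPairing_spectralCoeff {p : ℝ} (hp0 : 0 < p) {t : ℕ} (ht : 1 ≤ t)
    (hpt : (t + 1) * p ≤ 1) (k : ℕ) :
    (if k = 0 then 1 else 0) - p ^ t ≤
      coeffPairing (spectralCoeff p t) t ((X + C (-(p / (1 - p)))) ^ k) := by
  obtain ⟨n, rfl⟩ := Nat.exists_eq_add_of_le' ht
  have hp1 : p < 1 := by push_cast at hpt; nlinarith
  rcases k with _ | k
  · simp [coeffPairing_apply, coeff_one, spectralCoeff]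
  have hq : 0 < 1 - p := by linarith
  have hys : (1 - p)⁻¹ + -(p / (1 - p)) = 1 := by field_simp; ring
  have hx : (n + 1) * (p / (1 - p)) ≤ 1 := by
    rw [mul_div_assoc', div_le_one (by linarith)]; push_cast at hpt; linarith
  rw [pow_succ' (X + C _), coeffPairing_spectralCoeff_X_add_C_mul hp1,
    coeffPairing_X_add_C_pow hys]
  have htail := mul_nonneg (pow_nonneg hp0.le (n + 1))
    (mul_nonneg (pow_nonneg (inv_nonneg.mpr hq.le) (n + 1))
      (sum_range_neg_pow_mul_choose_nonneg (by positivity) hx k))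
  simp only [Nat.add_one_ne_zero, if_false]
  linarith

namespace PBiased

variable {α : Type*} [DecidableEq α] {p : ℝ}

/- `fourierCoeff p G S` is ⟨1_G, χ_S⟩ for the character χ_S = ∏_{i∈S} centered p · i, and
`pairFactor` is normalised so that ∏_{i∈S} pairFactor p x y i = χ_S(x) χ_S(y) / ‖χ_S‖². -/

variable (p) in
def centered (x : Finset α) (i : α) : ℝ := (if i ∈ x then 1 else 0) - p

variable (p) in
noncomputable def pairFactor (x y : Finset α) (i : α) : ℝ :=
  centered p x i * centered p y i / (p * (1 - p))

lemma one_add_pairFactor (hp0 : 0 < p) (hp1 : p < 1) (x y : Finset α) (i : α) :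
    1 + pairFactor p x y i =
      if i ∈ x then (if i ∈ y then p⁻¹ else 0) else (if i ∈ y then 0 else (1 - p)⁻¹) := by
  have hq : 1 - p ≠ 0 := by linarith
  unfold pairFactor centered
  split_ifs <;> field_simp <;> ring

lemma one_add_mul_pairFactor_of_mem (hp0 : 0 < p) (hp1 : p < 1) {x y : Finset α} {i : α}
    (hx : i ∈ x) (hy : i ∈ y) : 1 + -(p / (1 - p)) * pairFactor p x y i = 0 := by
  have hq : 1 - p ≠ 0 := by linarith
  simp only [pairFactor, centered, if_pos hx, if_pos hy]
  field_simp
  ring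

variable [Fintype α]

variable (p) in
def weight (x : Finset α) : ℝ := p ^ #x * (1 - p) ^ #xᶜ

variable (p) in
def fourierCoeff (G : Finset (Finset α)) (S : Finset α) : ℝ :=
  ∑ x ∈ G, weight p x * ∏ i ∈ S, centered p x i

lemma weight_pos (hp0 : 0 < p) (hp1 : p < 1) (x : Finset α) : 0 < weight p x := by
  have : 0 < 1 - p := by linarith
  unfold weight; positivity

lemma sum_mul_fourierCoeff_sq (Φ : ℕ → ℝ) (G : Finset (Finset α)) :
    ∑ S : Finset α, Φ #S * ((p * (1 - p))⁻¹ ^ #S * fourierCoeff p G S ^ 2) =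
      ∑ x ∈ G, ∑ y ∈ G, weight p x * weight p y *
        ∑ S : Finset α, Φ #S * ∏ i ∈ S, pairFactor p x y i := by
  have hsq : ∀ S : Finset α, (p * (1 - p))⁻¹ ^ #S * fourierCoeff p G S ^ 2 =
      ∑ x ∈ G, ∑ y ∈ G, weight p x * weight p y * ∏ i ∈ S, pairFactor p x y i := by
    intro S
    rw [fourierCoeff, sq, sum_mul_sum, mul_sum]
    refine sum_congr rfl fun x _ => ?_
    rw [mul_sum]
    refine sum_congr rfl fun y _ => ?_
    simp only [pairFactor, prod_div_distrib, prod_mul_distrib, prod_const, mul_inv, mul_pow]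
    ring
  simp only [hsq, mul_sum]
  rw [sum_comm]
  refine sum_congr rfl fun x _ => ?_
  rw [sum_comm]
  refine sum_congr rfl fun y _ => sum_congr rfl fun S _ => ?_
  ring

lemma prod_one_add_pairFactor (hp0 : 0 < p) (hp1 : p < 1) (x y : Finset α) :
    ∏ i, (1 + pairFactor p x y i) = if x = y then (weight p x)⁻¹ else 0 := by
  simp only [one_add_pairFactor hp0 hp1]
  split_ifs with hxy
  · subst hxy
    have hdiag : ∀ i, (if i ∈ x then (if i ∈ x then p⁻¹ else 0)
        else (if i ∈ x then 0 else (1 - p)⁻¹)) = if i ∈ x then p⁻¹ else (1 - p)⁻¹ := fun i => by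
      split_ifs <;> rfl
    rw [prod_congr rfl fun i _ => hdiag i, ← prod_mul_prod_compl x, prod_ite_of_true fun _ h => h,
      prod_ite_of_false fun _ h => mem_compl.mp h, prod_const, prod_const, weight, mul_inv,
      inv_pow, inv_pow]
  · obtain ⟨i, hi⟩ : ∃ i, ¬ (i ∈ x ↔ i ∈ y) := by
      by_contra! h; exact hxy (ext h)
    exact prod_eq_zero (mem_univ i) (by split_ifs <;> tauto)

theorem sum_fourierCoeff_sq (hp0 : 0 < p) (hp1 : p < 1) (G : Finset (Finset α)) :
    ∑ S : Finset α, (p * (1 - p))⁻¹ ^ #S * fourierCoeff p G S ^ 2 = ∑ x ∈ G, weight p x := by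
  have h := sum_mul_fourierCoeff_sq (p := p) (fun _ => 1) G
  simp only [one_mul] at h
  rw [h]
  refine sum_congr rfl fun x hx => ?_
  simp only [← powerset_univ, ← prod_one_add, prod_one_add_pairFactor hp0 hp1, mul_ite, mul_zero,
    sum_ite_eq, if_pos hx]
  field_simp [(weight_pos hp0 hp1 x).ne']

lemma fourierCoeff_empty (G : Finset (Finset α)) :
    fourierCoeff p G ∅ = ∑ x ∈ G, weight p x := by
  simp [fourierCoeff]

lemma sum_coeffPairing_mul_fourierCoeff_sq_eq_zero (hp0 : 0 < p) (hp1 : p < 1) (c : ℕ → ℝ)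
    {t : ℕ} (G : Finset (Finset α)) (hG : ∀ x ∈ G, ∀ y ∈ G, t ≤ #(x ∩ y)) :
    ∑ S : Finset α, coeffPairing c t ((X + C (-(p / (1 - p)))) ^ #S) *
      ((p * (1 - p))⁻¹ ^ #S * fourierCoeff p G S ^ 2) = 0 := by
  rw [sum_mul_fourierCoeff_sq fun k => coeffPairing c t ((X + C (-(p / (1 - p)))) ^ k)]
  refine sum_eq_zero fun x hx => sum_eq_zero fun y hy => ?_
  have hdvd := X_pow_dvd_sum_C_prod_mul_X_add_C_pow (-(p / (1 - p))) (pairFactor p x y)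
    (hG x hx y hy) fun i hi =>
      one_add_mul_pairFactor_of_mem hp0 hp1 (mem_inter.mp hi).1 (mem_inter.mp hi).2
  have hsum := coeffPairing_eq_zero_of_X_pow_dvd (c := c) hdvd
  simp only [map_sum, ← smul_eq_C_mul, map_smul, smul_eq_mul] at hsum
  simp only [mul_comm (coeffPairing c t _), hsum, mul_zero]

theorem sum_weight_le_pow_of_le_card_inter {t : ℕ} (ht : 1 ≤ t) (hp0 : 0 < p) (hpt : (t + 1) * p ≤ 1)
    (G : Finset (Finset α)) (hG : ∀ x ∈ G, ∀ y ∈ G, t ≤ #(x ∩ y)) :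
    ∑ x ∈ G, weight p x ≤ p ^ t := by
  have hp1 : p < 1 := by
    have : (1 : ℝ) ≤ t := by exact_mod_cast ht
    nlinarith
  set M := ∑ x ∈ G, weight p x with hMdef
  set w : Finset α → ℝ := fun S => (p * (1 - p))⁻¹ ^ #S * fourierCoeff p G S ^ 2 with hw
  have hM : 0 ≤ M := sum_nonneg fun x _ => (weight_pos hp0 hp1 x).le
  have hw0 : ∀ S, 0 ≤ w S := fun S => by
    have : 0 < 1 - p := by linarith
    positivity
  have key : M ^ 2 - p ^ t * M ≤ 0 := calc
    M ^ 2 - p ^ t * M = ∑ S : Finset α, ((if #S = 0 then 1 else 0) - p ^ t) * w S := by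
      simp only [sub_mul, sum_sub_distrib, ite_mul, one_mul, zero_mul, card_eq_zero,
        sum_ite_eq', mem_univ, if_true, ← mul_sum, hw, sum_fourierCoeff_sq hp0 hp1,
        fourierCoeff_empty, card_empty, pow_zero, ← hMdef]
    _ ≤ ∑ S : Finset α, coeffPairing (spectralCoeff p t) t ((X + C (-(p / (1 - p)))) ^ #S) * w S :=
      sum_le_sum fun S _ =>
        mul_le_mul_of_nonneg_right (sub_pow_le_coeffPairing_spectralCoeff hp0 ht hpt #S) (hw0 S)
    _ = 0 := sum_coeffPairing_mul_fourierCoeff_sq_eq_zero hp0 hp1 _ G hG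
  nlinarith [pow_pos hp0 t]

end PBiased

/-- For t ≥ 1 and 0 < p < 1/(t+1), if F is a t-intersecting family of subsets of [n]
and F' is its upward closure, then μ_p(F') ≤ p^t: a p-biased subset of [n] contains
some member of F with probability at most p^t. -/
theorem stmt_13 (t : ℕ) (ht : 1 ≤ t) (p : ℝ) (hp0 : 0 < p) (hp : p < 1 / (t + 1))
    (n : ℕ) (F : Finset (Finset (Fin n)))
    (hF : ∀ A ∈ F, ∀ B ∈ F, t ≤ (A ∩ B).card) :
    ∑ T ∈ Finset.univ.filter (fun T : Finset (Fin n) => ∃ S ∈ F, S ⊆ T),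
      p ^ T.card * (1 - p) ^ (n - T.card) ≤ p ^ t := by
  have hpt : (t + 1) * p ≤ 1 := by
    rw [lt_div_iff₀ (by positivity)] at hp; linarith
  set G := univ.filter fun T : Finset (Fin n) => ∃ S ∈ F, S ⊆ T
  have hG : ∀ x ∈ G, ∀ y ∈ G, t ≤ #(x ∩ y) := by
    simp only [G, mem_filter, mem_univ, true_and]
    rintro x ⟨A, hA, hAx⟩ y ⟨B, hB, hBy⟩
    exact (hF A hA B hB).trans (card_le_card (inter_subset_inter hAx hBy))
  convert PBiased.sum_weight_le_pow_of_le_card_inter ht hp0 hpt G hG using 3 with T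
  rw [PBiased.weight, card_compl, Fintype.card_fin]
end

section
/- For every integer c ≥ 2, there exists a natural number ℓ with ℓ < √c · e^c such that every c-intersecting hypergraph on a finite vertex set admits a c-strong coloring using ℓ colors. -/
universe u

/-!
Colour the vertices uniformly at random with `L` colours and write `c = q + 1`. An edge receives
fewer than `c` colours only if it is mapped into some `q`-set `S` of colours, i.e. only if the
random set `f⁻¹(S)`, which contains each vertex independently with probability `p = q / L`,
contains an edge. The sets containing an edge form a `c`-intersecting family, so by Frankl's
shifting and random-walk argument their `p`-biased measure is at most `p ^ c / (1 - (c + 2) p)`.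
A union bound over the `C(L, q)` choices of `S`, together with Stirling's formula, shows that
some colouring works as soon as `L > q ^ (q + 1) / q! + (q + 3) q`, which holds for the largest
integer `L < √c e^c`.
-/

open Finset

namespace StrongColoring

def IsTIntersecting {α : Type*} [DecidableEq α] (t : ℕ) (𝒜 : Finset (Finset α)) : Prop :=
  ∀ A ∈ 𝒜, ∀ B ∈ 𝒜, t ≤ #(A ∩ B)

section Shifting

def shift (i j : ℕ) (A : Finset ℕ) : Finset ℕ := insert i (A.erase j)

variable {i j n t : ℕ} {A B : Finset ℕ} {𝒜 : Finset (Finset ℕ)}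

lemma card_shift (hj : j ∈ A) (hi : i ∉ A) : #(shift i j A) = #A := by
  rw [shift, card_insert_of_notMem (fun h => hi (mem_of_mem_erase h)), card_erase_add_one hj]

lemma insert_erase_shift (hj : j ∈ A) (hi : i ∉ A) : insert j ((shift i j A).erase i) = A := by
  rw [shift, erase_insert (fun h => hi (mem_of_mem_erase h)), insert_erase hj]

lemma shift_inter (i j : ℕ) (A B : Finset ℕ) : shift i j (A ∩ B) = shift i j A ∩ shift i j B := by
  ext x
  simp only [shift, mem_insert, mem_inter, mem_erase]
  tauto

lemma sum_shift_lt (hij : i < j) (hj : j ∈ A) (hi : i ∉ A) :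
    ∑ x ∈ shift i j A, x < ∑ x ∈ A, x := by
  rw [shift, sum_insert (fun h => hi (mem_of_mem_erase h)), ← sum_erase_add A _ hj]
  omega

lemma shift_subset_range (hij : i < j) (hj : j ∈ A) (hA : A ⊆ range n) : shift i j A ⊆ range n :=
  insert_subset (mem_range.2 (hij.trans (mem_range.1 (hA hj)))) ((erase_subset _ _).trans hA)

def shiftMember (i j : ℕ) (𝒜 : Finset (Finset ℕ)) (A : Finset ℕ) : Finset ℕ :=
  if j ∈ A ∧ i ∉ A ∧ shift i j A ∉ 𝒜 then shift i j A else A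

def shiftFamily (i j : ℕ) (𝒜 : Finset (Finset ℕ)) : Finset (Finset ℕ) :=
  𝒜.image (shiftMember i j 𝒜)

def IsShifted (𝒜 : Finset (Finset ℕ)) : Prop :=
  ∀ A ∈ 𝒜, ∀ ⦃i j⦄, i < j → j ∈ A → i ∉ A → shift i j A ∈ 𝒜

lemma card_shiftMember (A : Finset ℕ) : #(shiftMember i j 𝒜 A) = #A := by
  unfold shiftMember
  split_ifs with h
  exacts [card_shift h.1 h.2.1, rfl]

lemma shiftMember_injOn : Set.InjOn (shiftMember i j 𝒜) 𝒜 := by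
  intro A hA B hB hAB
  unfold shiftMember at hAB
  split_ifs at hAB with hA' hB' hB'
  · rw [← insert_erase_shift hA'.1 hA'.2.1, hAB, insert_erase_shift hB'.1 hB'.2.1]
  · exact absurd (hAB ▸ hB) hA'.2.2
  · exact absurd (hAB ▸ hA) hB'.2.2
  · exact hAB

lemma sum_shiftFamily {M : Type*} [AddCommMonoid M] (g : Finset ℕ → M) :
    ∑ B ∈ shiftFamily i j 𝒜, g B = ∑ A ∈ 𝒜, g (shiftMember i j 𝒜 A) :=
  sum_image shiftMember_injOn

lemma sum_card_shiftFamily {M : Type*} [AddCommMonoid M] (w : ℕ → M) :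
    ∑ B ∈ shiftFamily i j 𝒜, w #B = ∑ A ∈ 𝒜, w #A := by
  simp only [sum_shiftFamily, card_shiftMember]

lemma sum_sum_shiftFamily_lt (hij : i < j) (hA : A ∈ 𝒜) (hj : j ∈ A) (hi : i ∉ A)
    (hA' : shift i j A ∉ 𝒜) :
    ∑ B ∈ shiftFamily i j 𝒜, ∑ x ∈ B, x < ∑ A ∈ 𝒜, ∑ x ∈ A, x := by
  rw [sum_shiftFamily]
  refine sum_lt_sum (fun B _ => ?_) ⟨A, hA, ?_⟩
  · unfold shiftMember
    split_ifs with hB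
    exacts [(sum_shift_lt hij hB.1 hB.2.1).le, le_rfl]
  · rw [shiftMember, if_pos ⟨hj, hi, hA'⟩]
    exact sum_shift_lt hij hj hi

lemma shiftFamily_subset_range (hij : i < j) (h𝒜 : ∀ A ∈ 𝒜, A ⊆ range n) :
    ∀ B ∈ shiftFamily i j 𝒜, B ⊆ range n := by
  simp only [shiftFamily, mem_image]
  rintro _ ⟨A, hA, rfl⟩
  unfold shiftMember
  split_ifs with h
  exacts [shift_subset_range hij h.1 (h𝒜 A hA), h𝒜 A hA]

lemma le_card_shift_inter (h𝒜 : IsTIntersecting t 𝒜) (hA : A ∈ 𝒜) (hB : B ∈ 𝒜)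
    (hjA : j ∈ A) (hiA : i ∉ A) (hB' : j ∈ B → i ∉ B → shift i j B ∈ 𝒜) :
    t ≤ #(shift i j A ∩ B) := by
  by_cases hjB : j ∈ B
  · by_cases hiB : i ∈ B
    · calc t ≤ #(A ∩ B) := h𝒜 A hA B hB
        _ = #(shift i j (A ∩ B)) :=
          (card_shift (mem_inter.2 ⟨hjA, hjB⟩) fun h => hiA (mem_inter.1 h).1).symm
        _ ≤ #(shift i j A ∩ B) := by
          rw [shift_inter]
          exact card_le_card (inter_subset_inter_left (insert_subset hiB (erase_subset _ _)))
    · calc t ≤ #(A ∩ shift i j B) := h𝒜 A hA _ (hB' hjB hiB)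
        _ ≤ #(shift i j A ∩ B) := card_le_card fun x => by
          simp only [shift, mem_inter, mem_insert, mem_erase]
          rintro ⟨hxA, rfl | ⟨hxj, hxB⟩⟩
          exacts [absurd hxA hiA, ⟨Or.inr ⟨hxj, hxA⟩, hxB⟩]
  · calc t ≤ #(A ∩ B) := h𝒜 A hA B hB
      _ ≤ #(shift i j A ∩ B) := card_le_card fun x => by
        simp only [shift, mem_inter, mem_insert, mem_erase]
        rintro ⟨hxA, hxB⟩
        exact ⟨Or.inr ⟨fun h => hjB (h ▸ hxB), hxA⟩, hxB⟩

lemma IsTIntersecting.shiftFamily (h𝒜 : IsTIntersecting t 𝒜) :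
    IsTIntersecting t (shiftFamily i j 𝒜) := by
  simp only [IsTIntersecting, StrongColoring.shiftFamily, mem_image]
  rintro _ ⟨A, hA, rfl⟩ _ ⟨B, hB, rfl⟩
  unfold shiftMember
  split_ifs with hA' hB' hB'
  · rw [← shift_inter, card_shift (mem_inter.2 ⟨hA'.1, hB'.1⟩) fun h => hA'.2.1 (mem_inter.1 h).1]
    exact h𝒜 A hA B hB
  · exact le_card_shift_inter h𝒜 hA hB hA'.1 hA'.2.1 fun hj hi => not_not.1 fun h => hB' ⟨hj, hi, h⟩
  · rw [inter_comm]
    exact le_card_shift_inter h𝒜 hB hA hB'.1 hB'.2.1 fun hj hi => not_not.1 fun h => hA' ⟨hj, hi, h⟩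
  · exact h𝒜 A hA B hB

theorem exists_isShifted (h𝒜n : ∀ A ∈ 𝒜, A ⊆ range n) (h𝒜 : IsTIntersecting t 𝒜) :
    ∃ ℬ, IsShifted ℬ ∧ IsTIntersecting t ℬ ∧ (∀ B ∈ ℬ, B ⊆ range n) ∧
      ∀ w : ℕ → ℝ, ∑ B ∈ ℬ, w #B = ∑ A ∈ 𝒜, w #A := by
  induction hN : ∑ A ∈ 𝒜, ∑ x ∈ A, x using Nat.strong_induction_on generalizing 𝒜 with
  | _ N ih =>
  by_cases hsh : IsShifted 𝒜
  · exact ⟨𝒜, hsh, h𝒜, h𝒜n, fun _ => rfl⟩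
  simp only [IsShifted, not_forall] at hsh
  obtain ⟨A, hA, i, j, hij, hj, hi, hA'⟩ := hsh
  obtain ⟨ℬ, hℬ, hℬt, hℬn, hw⟩ := ih _ (hN ▸ sum_sum_shiftFamily_lt hij hA hj hi hA')
    (shiftFamily_subset_range hij h𝒜n) h𝒜.shiftFamily rfl
  exact ⟨ℬ, hℬ, hℬt, hℬn, fun w => (hw w).trans (sum_card_shiftFamily w)⟩

end Shifting

section Walk

def rank (A : Finset ℕ) (x : ℕ) : ℕ := #{y ∈ A | y < x}

variable {A : Finset ℕ} {x y : ℕ}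

lemma rank_lt_rank (hx : x ∈ A) (hxy : x < y) : rank A x < rank A y := by
  refine card_lt_card ⟨fun z hz => ?_, fun h => ?_⟩
  · rw [mem_filter] at hz ⊢
    exact ⟨hz.1, hz.2.trans hxy⟩
  · exact lt_irrefl x (mem_filter.1 (h (mem_filter.2 ⟨hx, hxy⟩))).2

lemma rank_lt_card (hx : x ∈ A) : rank A x < #A :=
  card_lt_card (filter_ssubset.2 ⟨x, hx, lt_irrefl x⟩)

lemma rank_injOn (A : Finset ℕ) : Set.InjOn (rank A) A := by
  intro x hx y hy h
  by_contra hne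
  rcases Nat.lt_or_gt_of_ne hne with hlt | hlt
  exacts [(rank_lt_rank hx hlt).ne h, (rank_lt_rank hy hlt).ne h.symm]

lemma rank_eq_card_inter_range (A : Finset ℕ) (m : ℕ) : rank A m = #(A ∩ range m) := by
  rw [rank, ← filter_mem_eq_inter]
  simp

lemma image_rank (A : Finset ℕ) : A.image (rank A) = range #A :=
  eq_of_subset_of_card_le (image_subset_iff.2 fun _ hx => mem_range.2 (rank_lt_card hx))
    (by rw [card_range, card_image_of_injOn (rank_injOn A)])

lemma exists_rank_eq {r : ℕ} (hr : r < #A) : ∃ x ∈ A, rank A x = r :=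
  mem_image.1 (image_rank A ▸ mem_range.2 hr)

lemma card_filter_rank_lt {s : ℕ} (hs : s ≤ #A) : #{x ∈ A | rank A x < s} = s := by
  rw [← card_image_of_injOn ((rank_injOn A).mono (filter_subset _ A)),
    ← filter_image (p := (· < s)), image_rank]
  convert card_range s using 2
  ext x
  simp only [mem_filter, mem_range]
  omega

variable {𝒜 : Finset (Finset ℕ)} {s t : ℕ}

lemma filter_rank_erase {i : ℕ} (hx : x ∈ A) (hxr : rank A x = s + i) :
    {z ∈ A | rank A z < s ∨ s + i ≤ rank A z}.erase x =
      {z ∈ A | rank A z < s ∨ s + (i + 1) ≤ rank A z} := by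
  ext z
  simp only [mem_erase, mem_filter]
  by_cases hzx : z = x
  · subst hzx
    simp [hxr]
  · have h : z ∈ A → rank A z ≠ s + i := fun hz h =>
      hzx (rank_injOn A hz hx (h.trans hxr.symm))
    simp only [ne_eq, hzx, not_false_eq_true, true_and]
    constructor <;> rintro ⟨hz, h'⟩ <;> exact ⟨hz, by have := h hz; omega⟩

lemma exists_lt_notMem_union {Y : Finset ℕ} {m : ℕ} (h : #(A ∩ range m) + #Y < m) :
    ∃ y < m, y ∉ A ∧ y ∉ Y := by
  by_contra! hcon
  have hsub : range m ⊆ (A ∩ range m) ∪ Y := fun y hy => by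
    by_cases hyA : y ∈ A
    · exact mem_union_left _ (mem_inter.2 ⟨hyA, hy⟩)
    · exact mem_union_right _ (hcon y (mem_range.1 hy) hyA)
  have := (card_le_card hsub).trans (card_union_le _ _)
  rw [card_range] at this
  omega

/-- If `A` fails the conclusion of `IsShifted.exists_le_card_inter_range` at every `i`, then below
the element of rank `s + i` there is always a point outside `A` and the points used so far, so the
elements of `A` of ranks `s, s + 1, …` can be shifted out of `A` one at a time. -/
lemma IsShifted.exists_disjoint_union_mem (hsh : IsShifted 𝒜) (hA : A ∈ 𝒜)
    (hA' : ∀ i, #(A ∩ range (s + 1 + 2 * i)) < s + 1 + i) (i : ℕ) (hi : s + i ≤ #A) :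
    ∃ Y, Disjoint Y A ∧ #Y = i ∧ Y ∪ {x ∈ A | rank A x < s ∨ s + i ≤ rank A x} ∈ 𝒜 := by
  induction i with
  | zero =>
    refine ⟨∅, disjoint_empty_left _, rfl, ?_⟩
    rwa [empty_union, filter_true_of_mem fun x _ => by omega]
  | succ i ih =>
    obtain ⟨Y, hYA, hY, hB⟩ := ih (by omega)
    obtain ⟨x, hxA, hxr⟩ := exists_rank_eq (A := A) (r := s + i) (by omega)
    have hx : s + 1 + 2 * i ≤ x := by
      by_contra! h
      have := rank_lt_rank hxA h
      rw [rank_eq_card_inter_range A (s + 1 + 2 * i)] at this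
      have := hA' i
      omega
    obtain ⟨y, hy, hyA, hyY⟩ := exists_lt_notMem_union (A := A) (Y := Y) (m := s + 1 + 2 * i)
      (by have := hA' i; omega)
    have hxY : x ∉ Y := fun h => disjoint_left.1 hYA h hxA
    refine ⟨insert y Y, disjoint_insert_left.2 ⟨hyA, hYA⟩, by rw [card_insert_of_notMem hyY, hY],
      ?_⟩
    have := hsh _ hB (by omega : y < x) (mem_union_right _ (mem_filter.2 ⟨hxA, by omega⟩))
      (by simp only [mem_union, mem_filter, not_or]; exact ⟨hyY, fun h => hyA h.1⟩)
    rwa [shift, erase_union_distrib, erase_eq_of_notMem hxY, filter_rank_erase hxA hxr,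
      ← insert_union] at this

theorem IsShifted.exists_le_card_inter_range (hsh : IsShifted 𝒜) (h𝒜 : IsTIntersecting t 𝒜)
    (ht : 1 ≤ t) (hA : A ∈ 𝒜) : ∃ i, t + i ≤ #(A ∩ range (t + 2 * i)) := by
  obtain ⟨s, rfl⟩ : ∃ s, t = s + 1 := ⟨t - 1, by omega⟩
  by_contra! hA'
  have hsA : s + 1 ≤ #A := by simpa using h𝒜 A hA A hA
  obtain ⟨Y, hYA, -, hB⟩ :=
    hsh.exists_disjoint_union_mem hA hA' (#A - s) (by omega)
  have hBA : (Y ∪ {x ∈ A | rank A x < s ∨ s + (#A - s) ≤ rank A x}) ∩ A =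
      {x ∈ A | rank A x < s} := by
    rw [union_inter_distrib_right, disjoint_iff_inter_eq_empty.1 hYA, empty_union,
      inter_eq_left.2 (filter_subset _ _)]
    refine filter_congr fun z hz => ?_
    have := rank_lt_card hz
    omega
  have := h𝒜 _ hB A hA
  rw [hBA, card_filter_rank_lt (by omega)] at this
  omega

end Walk

section BiasedMeasure

noncomputable def biasedMeasure {α : Type*} (n : ℕ) (p : ℝ) (𝒜 : Finset (Finset α)) : ℝ :=
  ∑ A ∈ 𝒜, p ^ #A * (1 - p) ^ (n - #A)

variable {α β : Type*} {n t : ℕ} {p : ℝ}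

lemma biasedMeasure_nonneg (hp0 : 0 ≤ p) (hp1 : p ≤ 1) (𝒜 : Finset (Finset α)) :
    0 ≤ biasedMeasure n p 𝒜 :=
  sum_nonneg fun _ _ => mul_nonneg (pow_nonneg hp0 _) (pow_nonneg (sub_nonneg.2 hp1) _)

lemma biasedMeasure_mono (hp0 : 0 ≤ p) (hp1 : p ≤ 1) {𝒜 ℬ : Finset (Finset α)} (h : 𝒜 ⊆ ℬ) :
    biasedMeasure n p 𝒜 ≤ biasedMeasure n p ℬ :=
  sum_le_sum_of_subset_of_nonneg h fun _ _ _ =>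
    mul_nonneg (pow_nonneg hp0 _) (pow_nonneg (sub_nonneg.2 hp1) _)

lemma biasedMeasure_biUnion_le [DecidableEq α] (hp0 : 0 ≤ p) (hp1 : p ≤ 1) {ι : Type*}
    [DecidableEq ι] (s : Finset ι) (f : ι → Finset (Finset α)) :
    biasedMeasure n p (s.biUnion f) ≤ ∑ i ∈ s, biasedMeasure n p (f i) := by
  induction s using Finset.induction_on with
  | empty => simp [biasedMeasure]
  | insert a s ha ih =>
    rw [biUnion_insert, sum_insert ha]
    have hunion := sum_union_inter (s₁ := f a) (s₂ := s.biUnion f)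
      (f := fun A => p ^ #A * (1 - p) ^ (n - #A))
    have := biasedMeasure_nonneg (n := n) hp0 hp1 (f a ∩ s.biUnion f)
    unfold biasedMeasure at *
    linarith

lemma biasedMeasure_map (e : α ↪ β) (𝒜 : Finset (Finset α)) :
    biasedMeasure n p (𝒜.map (mapEmbedding e).toEmbedding) = biasedMeasure n p 𝒜 := by
  simp [biasedMeasure]

lemma biasedMeasure_Icc [DecidableEq α] {X T : Finset α} (hT : T ⊆ X) :
    biasedMeasure #X p (Icc T X) = p ^ #T := by
  have hdisj : ∀ B ∈ (X \ T).powerset, Disjoint T B := fun B hB =>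
    disjoint_of_subset_right (mem_powerset.1 hB) disjoint_sdiff
  rw [biasedMeasure, Icc_eq_image_powerset hT, sum_image fun B₁ h₁ B₂ h₂ h => by
    rw [← union_sdiff_cancel_left (hdisj B₁ h₁), ← union_sdiff_cancel_left (hdisj B₂ h₂)]
    exact congrArg (· \ T) h]
  have hterm : ∀ B ∈ (X \ T).powerset, p ^ #(T ∪ B) * (1 - p) ^ (#X - #(T ∪ B)) =
      p ^ #T * (p ^ #B * (1 - p) ^ (#(X \ T) - #B)) := fun B hB => by
    rw [card_union_of_disjoint (hdisj B hB), card_sdiff_of_subset hT, pow_add, Nat.sub_add_eq]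
    ring
  rw [sum_congr rfl hterm, ← mul_sum, sum_pow_mul_eq_add_pow, add_sub_cancel, one_pow, mul_one]

lemma biasedMeasure_filter_le_card_inter_le [DecidableEq α] (hp0 : 0 ≤ p) (hp1 : p ≤ 1)
    (X R : Finset α) (k : ℕ) :
    biasedMeasure #X p {W ∈ X.powerset | k ≤ #(W ∩ R)} ≤ (#R).choose k * p ^ k := by
  calc biasedMeasure #X p {W ∈ X.powerset | k ≤ #(W ∩ R)}
      ≤ biasedMeasure #X p ((powersetCard k R).biUnion fun T => Icc T X) := by
        refine biasedMeasure_mono hp0 hp1 fun W hW => ?_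
        rw [mem_filter, mem_powerset] at hW
        obtain ⟨T, hTW, hT⟩ := exists_subset_card_eq hW.2
        exact mem_biUnion.2 ⟨T, mem_powersetCard.2 ⟨hTW.trans inter_subset_right, hT⟩,
          mem_Icc.2 ⟨hTW.trans inter_subset_left, hW.1⟩⟩
    _ ≤ ∑ T ∈ powersetCard k R, biasedMeasure #X p (Icc T X) :=
        biasedMeasure_biUnion_le hp0 hp1 _ _
    _ ≤ ∑ T ∈ powersetCard k R, p ^ k := sum_le_sum fun T hT => by
        by_cases hTX : T ⊆ X
        · rw [biasedMeasure_Icc hTX, (mem_powersetCard.1 hT).2]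
        · rw [Icc_eq_empty hTX, biasedMeasure, sum_empty]
          positivity
    _ = (#R).choose k * p ^ k := by rw [sum_const, card_powersetCard, nsmul_eq_mul]

theorem biasedMeasure_le_sum_choose_of_subset_range (ht : 1 ≤ t) (hp0 : 0 ≤ p) (hp1 : p ≤ 1)
    {𝒜 : Finset (Finset ℕ)} (h𝒜n : ∀ A ∈ 𝒜, A ⊆ range n) (h𝒜 : IsTIntersecting t 𝒜) :
    biasedMeasure n p 𝒜 ≤ ∑ i ∈ range (n + 1), ((t + 2 * i).choose (t + i) : ℝ) * p ^ (t + i) := by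
  obtain ⟨ℬ, hℬ, hℬt, hℬn, hw⟩ := exists_isShifted h𝒜n h𝒜
  rw [biasedMeasure, ← hw fun k => p ^ k * (1 - p) ^ (n - k)]
  calc biasedMeasure n p ℬ
      ≤ biasedMeasure n p ((range (n + 1)).biUnion fun i =>
          {W ∈ (range n).powerset | t + i ≤ #(W ∩ range (t + 2 * i))}) := by
        refine biasedMeasure_mono hp0 hp1 fun B hB => ?_
        obtain ⟨i, hi⟩ := hℬ.exists_le_card_inter_range hℬt ht hB
        have : #B ≤ n := card_range n ▸ card_le_card (hℬn B hB)
        have : #(B ∩ range (t + 2 * i)) ≤ #B := card_le_card inter_subset_left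
        exact mem_biUnion.2
          ⟨i, mem_range.2 (by omega), mem_filter.2 ⟨mem_powerset.2 (hℬn B hB), hi⟩⟩
    _ ≤ ∑ i ∈ range (n + 1), biasedMeasure n p
          {W ∈ (range n).powerset | t + i ≤ #(W ∩ range (t + 2 * i))} :=
        biasedMeasure_biUnion_le hp0 hp1 _ _
    _ ≤ _ := sum_le_sum fun i _ => by
        simpa using
          biasedMeasure_filter_le_card_inter_le hp0 hp1 (range n) (range (t + 2 * i)) (t + i)

lemma IsTIntersecting.map [DecidableEq α] [DecidableEq β] (e : α ↪ β) {𝒜 : Finset (Finset α)}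
    (h𝒜 : IsTIntersecting t 𝒜) : IsTIntersecting t (𝒜.map (mapEmbedding e).toEmbedding) := by
  simp only [IsTIntersecting, mem_map, RelEmbedding.coe_toEmbedding, mapEmbedding_apply]
  rintro _ ⟨A, hA, rfl⟩ _ ⟨B, hB, rfl⟩
  rw [← map_inter, card_map]
  exact h𝒜 A hA B hB

theorem biasedMeasure_le_sum_choose {V : Type*} [Fintype V] [DecidableEq V] (ht : 1 ≤ t)
    (hp0 : 0 ≤ p) (hp1 : p ≤ 1) {𝒜 : Finset (Finset V)} (h𝒜 : IsTIntersecting t 𝒜) :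
    biasedMeasure (Fintype.card V) p 𝒜 ≤
      ∑ i ∈ range (Fintype.card V + 1), ((t + 2 * i).choose (t + i) : ℝ) * p ^ (t + i) := by
  let e : V ↪ ℕ := (Fintype.equivFin V).toEmbedding.trans Fin.valEmbedding
  rw [← biasedMeasure_map e]
  refine biasedMeasure_le_sum_choose_of_subset_range ht hp0 hp1 ?_ (h𝒜.map e)
  simp only [mem_map, RelEmbedding.coe_toEmbedding, mapEmbedding_apply]
  rintro _ ⟨A, -, rfl⟩ _ hx
  obtain ⟨v, -, rfl⟩ := mem_map.1 hx
  exact mem_range.2 (Fin.is_lt _)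

end BiasedMeasure

section Tail

variable {t : ℕ} {p : ℝ}

lemma choose_add_two_mul_le_pow (ht : 2 ≤ t) (i : ℕ) : (t + 2 * i).choose i ≤ (t + 2) ^ i := by
  induction i with
  | zero => simp
  | succ i ih =>
    set m := t + 2 * i
    have hrec :
        (m + 2).choose (i + 1) * (i + 1) * (t + i + 1) = (m + 2) * (m + 1) * m.choose i := by
      have h1 := Nat.add_one_mul_choose_eq (m + 1) i
      have h2 := Nat.choose_mul_succ_eq m i
      rw [show m + 1 - i = t + i + 1 by omega] at h2
      calc (m + 2).choose (i + 1) * (i + 1) * (t + i + 1)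
          = (m + 2) * ((m + 1).choose i * (t + i + 1)) := by rw [← h1]; ring
        _ = (m + 2) * (m + 1) * m.choose i := by rw [← h2]; ring
    have hpoly : (m + 2) * (m + 1) ≤ (t + 2) * ((i + 1) * (t + i + 1)) := by
      obtain ⟨d, rfl⟩ := Nat.exists_eq_add_of_le ht
      exact Nat.le.intro (k := d ^ 2 * i + d * i ^ 2 + 4 * d * i + 2 * i) (by simp only [m]; ring)
    rw [show t + 2 * (i + 1) = m + 2 by omega]
    refine Nat.le_of_mul_le_mul_right (c := (i + 1) * (t + i + 1)) ?_ (by positivity)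
    calc (m + 2).choose (i + 1) * ((i + 1) * (t + i + 1))
        = (m + 2) * (m + 1) * m.choose i := by rw [← hrec]; ring
      _ ≤ (t + 2) * ((i + 1) * (t + i + 1)) * (t + 2) ^ i := Nat.mul_le_mul hpoly ih
      _ = (t + 2) ^ (i + 1) * ((i + 1) * (t + i + 1)) := by ring

lemma sum_choose_mul_pow_le (ht : 2 ≤ t) (hp0 : 0 ≤ p) (hr : (t + 2) * p < 1) (m : ℕ) :
    ∑ i ∈ range m, ((t + 2 * i).choose (t + i) : ℝ) * p ^ (t + i) ≤ p ^ t / (1 - (t + 2) * p) := by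
  set r := (t + 2) * p
  have hterm : ∀ i, ((t + 2 * i).choose (t + i) : ℝ) * p ^ (t + i) ≤ p ^ t * r ^ i := fun i => by
    rw [show (t + 2 * i).choose (t + i) = (t + 2 * i).choose i from
      Nat.choose_symm_of_eq_add (by omega), pow_add, mul_pow, mul_left_comm]
    gcongr
    exact_mod_cast choose_add_two_mul_le_pow ht i
  have hgeom : ∑ i ∈ range m, r ^ i ≤ r ^ 0 / (1 - r) :=
    range_eq_Ico m ▸ geom_sum_Ico_le_of_lt_one (by positivity) hr
  calc _ ≤ ∑ i ∈ range m, p ^ t * r ^ i := sum_le_sum fun i _ => hterm i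
    _ = p ^ t * ∑ i ∈ range m, r ^ i := (mul_sum _ _ _).symm
    _ ≤ p ^ t * (r ^ 0 / (1 - r)) := by gcongr
    _ = p ^ t / (1 - r) := by ring

end Tail

theorem biasedMeasure_le_of_isTIntersecting {V : Type*} [Fintype V] [DecidableEq V] {t : ℕ}
    {p : ℝ} (ht : 2 ≤ t) (hp0 : 0 ≤ p) (hr : (t + 2) * p < 1) {𝒜 : Finset (Finset V)}
    (h𝒜 : IsTIntersecting t 𝒜) :
    biasedMeasure (Fintype.card V) p 𝒜 ≤ p ^ t / (1 - (t + 2) * p) := by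
  have hp1 : p ≤ 1 := by
    have : (1 : ℝ) ≤ t + 2 := by norm_cast; omega
    nlinarith
  exact (biasedMeasure_le_sum_choose (by omega) hp0 hp1 h𝒜).trans
    (sum_choose_mul_pow_le ht hp0 hr _)

section Colorings

variable {V : Type*} [Fintype V] {L : ℕ}

lemma card_filter_preimage_eq [DecidableEq V] (S : Finset (Fin L)) (W : Finset V) :
    #{f : V → Fin L | ({v | f v ∈ S} : Finset V) = W} =
      #S ^ #W * (L - #S) ^ (Fintype.card V - #W) := by
  have : ({f : V → Fin L | ({v | f v ∈ S} : Finset V) = W} : Finset (V → Fin L)) =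
      Fintype.piFinset fun v => if v ∈ W then S else Sᶜ := by
    ext f
    simp only [mem_filter, mem_univ, true_and, Fintype.mem_piFinset, Finset.ext_iff]
    refine forall_congr' fun v => ?_
    split_ifs with hv <;> simp [hv]
  rw [this, Fintype.card_piFinset]
  simp only [apply_ite card]
  rw [prod_ite, prod_const, prod_const, card_compl, Fintype.card_fin,
    filter_mem_eq_inter, univ_inter, filter_not, filter_mem_eq_inter, univ_inter,
    card_sdiff_of_subset (subset_univ W), card_univ]

lemma card_filter_preimage_mem [DecidableEq V] (S : Finset (Fin L)) (𝒰 : Finset (Finset V)) :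
    #{f : V → Fin L | ({v | f v ∈ S} : Finset V) ∈ 𝒰} =
      ∑ W ∈ 𝒰, #S ^ #W * (L - #S) ^ (Fintype.card V - #W) := by
  refine (card_eq_sum_card_fiberwise (f := fun f : V → Fin L => ({v | f v ∈ S} : Finset V))
    fun f hf => (mem_filter.1 hf).2).trans (sum_congr rfl fun W hW => ?_)
  rw [← card_filter_preimage_eq S W, filter_filter]
  congr 1
  exact filter_congr fun f _ => ⟨And.right, fun h => ⟨by simpa [h] using hW, h⟩⟩

lemma cast_sum_pow_mul_pow {s : ℕ} (hL : 0 < L) (hs : s ≤ L) (𝒰 : Finset (Finset V)) :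
    ((∑ W ∈ 𝒰, s ^ #W * (L - s) ^ (Fintype.card V - #W) : ℕ) : ℝ) =
      L ^ Fintype.card V * biasedMeasure (Fintype.card V) (s / L) 𝒰 := by
  rw [biasedMeasure, mul_sum]
  push_cast [Nat.cast_sub hs]
  refine sum_congr rfl fun W _ => ?_
  have hL' : (L : ℝ) ≠ 0 := by positivity
  rw [← Nat.add_sub_cancel' (card_le_univ W), pow_add, Nat.add_sub_cancel_left, one_sub_div hL',
    div_pow, div_pow]
  field_simp

end Colorings

section StrongColorings

variable {V : Type*} [Fintype V] [DecidableEq V]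

open Classical in
theorem card_filter_exists_image_subset_le {t L : ℕ} (ht : 2 ≤ t) (hL : 0 < L) (E : Set (Finset V))
    (hE : ∀ e₁ ∈ E, ∀ e₂ ∈ E, t ≤ #(e₁ ∩ e₂)) (S : Finset (Fin L))
    (hS : (t + 2) * (#S / L : ℝ) < 1) :
    (#{f : V → Fin L | ∃ e ∈ E, e.image f ⊆ S} : ℝ) ≤
      L ^ Fintype.card V * ((#S / L : ℝ) ^ t / (1 - (t + 2) * (#S / L : ℝ))) := by
  set 𝒰 : Finset (Finset V) := {W | ∃ e ∈ E, e ⊆ W}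
  have h𝒰 : IsTIntersecting t 𝒰 := by
    simp only [IsTIntersecting, 𝒰, mem_filter, mem_univ, true_and]
    rintro W₁ ⟨e₁, he₁, h₁⟩ W₂ ⟨e₂, he₂, h₂⟩
    exact (hE e₁ he₁ e₂ he₂).trans (card_le_card (inter_subset_inter h₁ h₂))
  rw [filter_congr (q := fun f => ({v | f v ∈ S} : Finset V) ∈ 𝒰) fun f _ => by
      simp [𝒰, subset_iff], card_filter_preimage_mem,
    cast_sum_pow_mul_pow hL (by simpa using card_le_univ S)]
  gcongr
  exact biasedMeasure_le_of_isTIntersecting ht (by positivity) hS h𝒰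

open Classical in
theorem exists_forall_lt_card_image_of_choose_mul_lt {q L : ℕ} (hqL : q ≤ L) (E : Set (Finset V))
    (B : ℝ)
    (hB : ∀ S : Finset (Fin L), #S = q → (#{f : V → Fin L | ∃ e ∈ E, e.image f ⊆ S} : ℝ) ≤ B)
    (hlt : L.choose q * B < L ^ Fintype.card V) : ∃ f : V → Fin L, ∀ e ∈ E, q < #(e.image f) := by
  by_contra! h
  have hcover : (univ : Finset (V → Fin L)) ⊆
      (powersetCard q univ).biUnion fun S => {f | ∃ e ∈ E, e.image f ⊆ S} := fun f _ => by
    obtain ⟨e, he, hef⟩ := h f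
    obtain ⟨S, hS, hSq⟩ := exists_superset_card_eq hef (by simpa using hqL)
    exact mem_biUnion.2 ⟨S, mem_powersetCard.2 ⟨subset_univ S, hSq⟩,
      mem_filter.2 ⟨mem_univ f, e, he, hS⟩⟩
  have hcard := (card_le_card hcover).trans card_biUnion_le
  have : (L : ℝ) ^ Fintype.card V ≤ L.choose q * B :=
    calc (L : ℝ) ^ Fintype.card V = #(univ : Finset (V → Fin L)) := by simp
      _ ≤ ∑ S ∈ powersetCard q univ, (#{f : V → Fin L | ∃ e ∈ E, e.image f ⊆ S} : ℝ) := by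
        exact_mod_cast hcard
      _ ≤ ∑ S ∈ powersetCard q (univ : Finset (Fin L)), B :=
        sum_le_sum fun S hS => hB S (mem_powersetCard.1 hS).2
      _ = L.choose q * B := by simp
  linarith

end StrongColorings

section Numerics

open Real

lemma pow_succ_div_factorial_le {q : ℕ} (hq : 0 < q) :
    (q : ℝ) ^ (q + 1) / q.factorial ≤ √q * exp q / √(2 * π) := by
  have hq' : (0 : ℝ) < q := by exact_mod_cast hq
  have hS : 0 < √(2 * π * q) * (q / exp 1) ^ q := by positivity
  calc (q : ℝ) ^ (q + 1) / q.factorial ≤ q ^ (q + 1) / (√(2 * π * q) * (q / exp 1) ^ q) :=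
        div_le_div_of_nonneg_left (by positivity) hS (Stirling.le_factorial_stirling q)
    _ = √q * exp q / √(2 * π) := by
        rw [div_pow, exp_one_pow, sqrt_mul (by positivity), pow_succ]
        field_simp
        exact (sq_sqrt hq'.le).symm

lemma sq_add_le_sqrt_mul_exp {c : ℕ} (hc : 2 ≤ c) : (c : ℝ) ^ 2 + c ≤ 3 / 5 * (√c * exp c) := by
  induction c, hc using Nat.le_induction with
  | base =>
    have hsqrt : (1.41 : ℝ) ≤ √2 := le_sqrt_of_sq_le (by norm_num)
    have he : (2.718 : ℝ) ≤ exp 1 := exp_one_gt_d9.le.trans' (by norm_num)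
    have he2 : exp (2 : ℕ) = exp 1 * exp 1 := by rw [← exp_add]; norm_num
    rw [he2]
    push_cast
    nlinarith [mul_le_mul he he (by norm_num) (by positivity)]
  | succ c hc ih =>
    have hc' : (2 : ℝ) ≤ c := by exact_mod_cast hc
    have he : (2 : ℝ) ≤ exp 1 := by linarith [add_one_le_exp (1 : ℝ)]
    have hsqrt : √(c : ℝ) ≤ √((c : ℝ) + 1) := sqrt_le_sqrt (by linarith)
    have hgrowth : √(c : ℝ) * exp c * 2 ≤ √((c : ℝ) + 1) * (exp c * exp 1) := by
      rw [← mul_assoc]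
      exact mul_le_mul (mul_le_mul_of_nonneg_right hsqrt (exp_pos _).le) he zero_le_two
        (by positivity)
    push_cast
    rw [exp_add]
    nlinarith

lemma pow_succ_div_factorial_add_le {q : ℕ} (hq : 0 < q) :
    (q : ℝ) ^ (q + 1) / q.factorial + (q + 3) * q + 2 ≤
      √((q + 1 : ℕ) : ℝ) * exp ((q + 1 : ℕ) : ℝ) := by
  have hpoly := sq_add_le_sqrt_mul_exp (c := q + 1) (by omega)
  have hstirling :
      (q : ℝ) ^ (q + 1) / q.factorial ≤ 2 / 5 * (√((q : ℝ) + 1) * exp ((q : ℝ) + 1)) :=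
    calc (q : ℝ) ^ (q + 1) / q.factorial ≤ √q * exp q / √(2 * π) := pow_succ_div_factorial_le hq
      _ ≤ √q * exp q := div_le_self (by positivity) (one_le_sqrt.2 (by linarith [pi_gt_three]))
      _ ≤ √((q : ℝ) + 1) * exp q := by gcongr; linarith
      _ ≤ 2 / 5 * (√((q : ℝ) + 1) * exp ((q : ℝ) + 1)) := by
        rw [exp_add]
        have : 0 ≤ √((q : ℝ) + 1) * exp q := by positivity
        nlinarith [exp_one_gt_d9]
  push_cast at hpoly ⊢
  nlinarith

end Numerics

lemma choose_mul_pow_div_lt_one {q L : ℕ} (hq : 0 < q)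
    (hL : (q : ℝ) ^ (q + 1) / q.factorial + (q + 3) * q < L) :
    (L.choose q : ℝ) * ((q / L : ℝ) ^ (q + 1) / (1 - (q + 3) * (q / L : ℝ))) < 1 := by
  have hratio : 0 < (q : ℝ) ^ (q + 1) / q.factorial := by positivity
  have hD : 0 < (L : ℝ) - (q + 3) * q := by linarith
  have hL0 : (0 : ℝ) < L := by nlinarith
  calc (L.choose q : ℝ) * ((q / L : ℝ) ^ (q + 1) / (1 - (q + 3) * (q / L : ℝ)))
      ≤ (L : ℝ) ^ q / q.factorial * ((q / L : ℝ) ^ (q + 1) / (1 - (q + 3) * (q / L : ℝ))) := by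
        have : 0 < 1 - (q + 3) * (q / L : ℝ) := by
          rw [sub_pos, ← mul_div_assoc, div_lt_one hL0]
          linarith
        gcongr
        exact Nat.choose_le_pow_div q L
    _ = (q : ℝ) ^ (q + 1) / q.factorial / ((L : ℝ) - (q + 3) * q) := by
        rw [div_pow]
        field_simp
        ring
    _ < 1 := (div_lt_one hD).2 (by linarith)

theorem exists_forall_lt_card_image {q L : ℕ} (hq : 0 < q)
    (hL : (q : ℝ) ^ (q + 1) / q.factorial + (q + 3) * q < L) (V : Type*) [Fintype V]
    [DecidableEq V] (E : Set (Finset V)) (hE : ∀ e₁ ∈ E, ∀ e₂ ∈ E, q + 1 ≤ #(e₁ ∩ e₂)) :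
    ∃ f : V → Fin L, ∀ e ∈ E, q < #(e.image f) := by
  have hqL : (q + 3) * q < (L : ℝ) := by
    linarith [show 0 < (q : ℝ) ^ (q + 1) / q.factorial by positivity]
  have hL0 : 0 < L := by exact_mod_cast (show (0 : ℝ) < L by nlinarith)
  have hr : (q + 3) * (q / L : ℝ) < 1 := by
    rw [← mul_div_assoc, div_lt_one (by exact_mod_cast hL0)]
    exact hqL
  have hcast : ((q + 1 : ℕ) : ℝ) + 2 = q + 3 := by push_cast; ring
  refine exists_forall_lt_card_image_of_choose_mul_lt
    (B := L ^ Fintype.card V * ((q / L : ℝ) ^ (q + 1) / (1 - (q + 3) * (q / L : ℝ))))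
    (by exact_mod_cast (show (q : ℝ) ≤ L by nlinarith)) E (fun S hS => ?_) ?_
  · simpa only [hS, hcast] using
      card_filter_exists_image_subset_le (by omega) hL0 E hE S (by rwa [hS, hcast])
  · rw [mul_left_comm]
    exact mul_lt_of_lt_one_right (by positivity) (choose_mul_pow_div_lt_one hq hL)

end StrongColoring

/-- For every c ≥ 2 there is a number of colors ℓ < √c · e^c such that every
c-intersecting hypergraph on a finite vertex set has a c-strong coloring with
ℓ colors (i.e. χ(c, c) < √c · e^c). -/
theorem stmt_18 (c : ℕ) (hc : 2 ≤ c) :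
    ∃ ℓ : ℕ, (ℓ : ℝ) < Real.sqrt c * Real.exp c ∧
      ∀ (V : Type u) [Fintype V] [DecidableEq V] (E : Set (Finset V)),
        (∀ e₁ ∈ E, ∀ e₂ ∈ E, c ≤ (e₁ ∩ e₂).card) →
        ∃ f : V → Fin ℓ, ∀ e ∈ E, min c e.card ≤ (e.image f).card := by
  obtain ⟨q, rfl⟩ : ∃ q, c = q + 1 := ⟨c - 1, by omega⟩
  have hx := StrongColoring.pow_succ_div_factorial_add_le (q := q) (by omega)
  set x := Real.sqrt ((q + 1 : ℕ) : ℝ) * Real.exp ((q + 1 : ℕ) : ℝ)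
  have hx0 : 0 < x := by positivity
  obtain ⟨L, hLx, hxL⟩ : ∃ L : ℕ, (L : ℝ) < x ∧ x - 1 ≤ L := by
    refine ⟨⌈x⌉₊ - 1, ?_, ?_⟩ <;>
      rw [Nat.cast_sub (Nat.one_le_ceil_iff.2 hx0), Nat.cast_one]
    exacts [by linarith [Nat.ceil_lt_add_one hx0.le], by linarith [Nat.le_ceil x]]
  refine ⟨L, hLx, fun V _ _ E hE => ?_⟩
  have hL : (q : ℝ) ^ (q + 1) / q.factorial + (q + 3) * q < L := by linarith
  obtain ⟨f, hf⟩ := StrongColoring.exists_forall_lt_card_image (by omega) hL V E hE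
  exact ⟨f, fun e he => (min_le_left _ _).trans (hf e he)⟩
end
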